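/- Let k be an étale cubic algebra over ℚ and f a square-free positive integer such that no prime dividing f is of type 3 in k. Then for each ideal f of O_k with fO_k ⊆ f and N(f) = f², there exists exactly one order R of index f in O_k whose conductor is f, namely R = ℤ + f. -/

import Mathlib

section Preliminaries

variable {k : Type*} [CommRing k]

/-- The largest `B`-ideal contained in the subring `A` of `k` (for `A ≤ B` this is the
conductor of the order `A`), realized as an ideal of `B`. -/
def conductorOf (A B : Subring k) : Ideal ↥B where
  carrier := {x : ↥B | ∀ y : ↥B, (x : k) * (y : k) ∈ A}
  add_mem' := by
    intro x y hx hy z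
    simpa [add_mul] using A.add_mem (hx z) (hy z)
  zero_mem' := by
    intro z
    simpa using A.zero_mem
  smul_mem' := by
    intro r x hx z
    have h := hx (r * z)
    have heq : ((r • x : ↥B) : k) * (z : k) = (x : k) * ((r * z : ↥B) : k) := by
      push_cast [smul_eq_mul]
      ring
    rw [heq]
    exact h

/-- The conductor of `A` in `B`, regarded as an ideal of the ring `A` (requires `A ≤ B`). -/
def conductorIn (A B : Subring k) (hAB : A ≤ B) : Ideal ↥A where
  carrier := {x : ↥A | ∀ y : ↥B, (x : k) * (y : k) ∈ A}
  add_mem' := by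
    intro x y hx hy z
    simpa [add_mul] using A.add_mem (hx z) (hy z)
  zero_mem' := by
    intro z
    simpa using A.zero_mem
  smul_mem' := by
    intro r x hx z
    have h := hx (⟨(r : k), hAB r.2⟩ * z)
    have heq : ((r • x : ↥A) : k) * (z : k)
        = (x : k) * (((⟨(r : k), hAB r.2⟩ : ↥B) * z : ↥B) : k) := by
      push_cast [smul_eq_mul]
      ring
    rw [heq]
    exact h

/-- The index `(B : A)` of one subring of `k` in another (as additive subgroups). -/
noncomputable def subringIndex (A B : Subring k) : ℕ :=
  AddSubgroup.relIndex A.toAddSubgroup B.toAddSubgroup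

/-- The norm of an ideal: the cardinality of the quotient ring. -/
noncomputable def idealNorm {R : Type*} [CommRing R] (I : Ideal R) : ℕ :=
  Nat.card (R ⧸ I)

end Preliminaries

section Etale

-- `k` is an étale algebra over `ℚ`: a finite-dimensional reduced commutative `ℚ`-algebra.
variable (k : Type*) [CommRing k] [Algebra ℚ k] [FiniteDimensional ℚ k] [IsReduced k]

/-- The maximal order of `k`: the integral closure of `ℤ` in `k`. -/
noncomputable def maximalOrder : Subring k := (integralClosure ℤ k).toSubring

/-- An order of `k`: a subring of the maximal order of finite (additive) index. -/
def IsOrder (O : Subring k) : Prop :=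
  O ≤ maximalOrder k ∧ subringIndex O (maximalOrder k) ≠ 0

end Etale

/-!
Since `f ∈ 𝔣`, the image of `ℤ` in the ring `O_k / 𝔣` of order `f²` is `ℤ / c` with `c` its
characteristic, `c ∣ f`. Every prime dividing `f` divides the exponent of `O_k / 𝔣`, which is `c`,
so squarefreeness forces `c = f` and `ℤ + 𝔣` has index `f² / f = f`. Any order with conductor `𝔣`
contains `ℤ + 𝔣`, hence equals it once both have index `f`. Finally, the conductor of `ℤ + 𝔣`
contains `𝔣`; conversely, if `x = n + a` (`a ∈ 𝔣`) lies in it then `n` kills the group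
`O_k / (ℤ + 𝔣)` of squarefree order `f`, so `f ∣ n` and `x ∈ 𝔣`.
-/

theorem Squarefree.dvd_of_forall_prime_dvd {m n : ℕ} (hm : Squarefree m)
    (h : ∀ p : ℕ, p.Prime → p ∣ m → p ∣ n) : m ∣ n := by
  rcases eq_or_ne n 0 with rfl | hn
  · exact dvd_zero m
  have hsub : m.primeFactors ⊆ n.primeFactors := fun p hp =>
    Nat.mem_primeFactors.mpr ⟨Nat.prime_of_mem_primeFactors hp,
      h p (Nat.prime_of_mem_primeFactors hp) (Nat.dvd_of_mem_primeFactors hp), hn⟩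
  calc m = ∏ p ∈ m.primeFactors, p := (Nat.prod_primeFactors_of_squarefree hm).symm
    _ ∣ ∏ p ∈ n.primeFactors, p := Finset.prod_dvd_prod_of_subset _ _ _ hsub
    _ ∣ n := Nat.prod_primeFactors_dvd n

theorem Squarefree.natCast_dvd_of_forall_zsmul_eq_zero {G : Type*} [AddGroup G] [Finite G]
    {m : ℕ} (hm : Squarefree m) (hmG : m ∣ Nat.card G) {n : ℤ} (hn : ∀ x : G, n • x = 0) :
    (m : ℤ) ∣ n := by
  rw [Int.natCast_dvd]
  refine hm.dvd_of_forall_prime_dvd fun p hp hpm => ?_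
  have := Fact.mk hp
  obtain ⟨x, hx⟩ := exists_prime_addOrderOf_dvd_card' p (hpm.trans hmG)
  rw [← Int.natCast_dvd, ← hx]
  exact addOrderOf_dvd_iff_zsmul_eq_zero.mpr (hn x)

theorem ringChar_eq_of_squarefree {Q : Type*} [Ring Q] [Finite Q] {f : ℕ} (hf : Squarefree f)
    (hfQ : (f : Q) = 0) (hcard : f ∣ Nat.card Q) : ringChar Q = f :=
  Nat.dvd_antisymm (ringChar.dvd hfQ) <| Int.natCast_dvd_natCast.mp <|
    hf.natCast_dvd_of_forall_zsmul_eq_zero hcard fun x => by simp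

namespace Ideal

variable {A : Type*} [CommRing A] (𝔣 : Ideal A)

/-- The subring `ℤ + 𝔣`. -/
def intPlus : Subring A := (⊥ : Subring (A ⧸ 𝔣)).comap (Quotient.mk 𝔣)

variable {𝔣}

theorem mem_intPlus {x : A} : x ∈ 𝔣.intPlus ↔ ∃ n : ℤ, x - n • 1 ∈ 𝔣 := by
  simp [intPlus, Subring.mem_bot, ← Quotient.eq, eq_comm]

theorem mem_intPlus_of_mem {x : A} (hx : x ∈ 𝔣) : x ∈ 𝔣.intPlus :=
  mem_intPlus.mpr ⟨0, by simpa using hx⟩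

variable (𝔣)

theorem toAddSubgroup_intPlus :
    𝔣.intPlus.toAddSubgroup =
      (AddSubgroup.zmultiples (1 : A ⧸ 𝔣)).comap (Quotient.mk 𝔣).toAddMonoidHom := by
  ext x
  simp [intPlus, Subring.mem_bot, AddSubgroup.mem_zmultiples_iff]

theorem index_intPlus_mul_ringChar :
    𝔣.intPlus.toAddSubgroup.index * ringChar (A ⧸ 𝔣) = Nat.card (A ⧸ 𝔣) := by
  have := CharP.addOrderOf_one (A ⧸ 𝔣)
  rw [toAddSubgroup_intPlus, AddSubgroup.index_comap_of_surjective _ Quotient.mk_surjective,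
    ringChar.eq (A ⧸ 𝔣) (addOrderOf 1), ← Nat.card_zmultiples, AddSubgroup.index_mul_card]

variable {𝔣} {f : ℕ}

theorem index_intPlus (hf : Squarefree f) (hmem : (f : A) ∈ 𝔣)
    (hcard : Nat.card (A ⧸ 𝔣) = f ^ 2) : 𝔣.intPlus.toAddSubgroup.index = f := by
  have : Finite (A ⧸ 𝔣) := Nat.finite_of_card_ne_zero (by simp [hcard, hf.ne_zero])
  have hchar : ringChar (A ⧸ 𝔣) = f := ringChar_eq_of_squarefree hf
    (by rwa [← map_natCast (Quotient.mk 𝔣), Quotient.eq_zero_iff_mem]) (by simp [hcard])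
  have hmul := index_intPlus_mul_ringChar 𝔣
  rw [hchar, hcard, sq] at hmul
  exact Nat.eq_of_mul_eq_mul_right (Nat.pos_of_ne_zero hf.ne_zero) hmul

theorem mem_of_forall_mul_mem_intPlus (hf : Squarefree f) (hmem : (f : A) ∈ 𝔣)
    (hindex : 𝔣.intPlus.toAddSubgroup.index = f) {x : A} (hx : ∀ y, x * y ∈ 𝔣.intPlus) :
    x ∈ 𝔣 := by
  obtain ⟨n, hn⟩ := mem_intPlus.mp (by simpa using hx 1)
  have : Finite (A ⧸ 𝔣.intPlus.toAddSubgroup) :=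
    Nat.finite_of_card_ne_zero (by rw [← AddSubgroup.index_eq_card, hindex]; exact hf.ne_zero)
  have hkill : ∀ q : A ⧸ 𝔣.intPlus.toAddSubgroup, n • q = 0 := by
    intro q
    induction q using QuotientAddGroup.induction_on with | H y => ?_
    have hny : n • y = x * y - (x - n • 1) * y := by rw [zsmul_eq_mul, zsmul_eq_mul]; ring
    rw [← QuotientAddGroup.mk_zsmul, QuotientAddGroup.eq_zero_iff, hny]
    exact sub_mem (hx y) (mem_intPlus_of_mem (mul_mem_right y _ hn))
  obtain ⟨c, rfl⟩ := hf.natCast_dvd_of_forall_zsmul_eq_zero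
    (by rw [← AddSubgroup.index_eq_card, hindex]) hkill
  have hfc : ((f : ℤ) * c) • (1 : A) = c * f := by rw [zsmul_eq_mul]; push_cast; ring
  convert add_mem hn (mul_mem_left 𝔣 c hmem)
  rw [← hfc, sub_add_cancel]

end Ideal

section Conductor

variable {k : Type*} [CommRing k] {B : Subring k}

theorem Subring.coe_mem_map_subtype {T : Subring B} {x : B} :
    (x : k) ∈ T.map B.subtype ↔ x ∈ T := by
  simp [Subring.mem_map]

theorem subringIndex_map_subtype (T : Subring B) :
    subringIndex (T.map B.subtype) B = T.toAddSubgroup.index := by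
  have hT : (T.map B.subtype).toAddSubgroup = T.toAddSubgroup.map B.subtype.toAddMonoidHom := by
    ext; simp
  have hB : B.toAddSubgroup = (⊤ : AddSubgroup B).map B.subtype.toAddMonoidHom := by
    ext; simp
  rw [subringIndex, hT, hB, AddSubgroup.relIndex_map_map_of_injective _ _ Subtype.val_injective,
    AddSubgroup.relIndex_top_right]

theorem coe_mem_of_mem_conductorOf {O : Subring k} {x : B} (hx : x ∈ conductorOf O B) :
    (x : k) ∈ O := by
  simpa using hx 1

theorem eq_of_le_of_subringIndex_eq {S O : Subring k} (hSO : S ≤ O) (hOB : O ≤ B)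
    (h : subringIndex S B = subringIndex O B) (h0 : subringIndex O B ≠ 0) : S = O := by
  have hmul := AddSubgroup.relIndex_mul_relIndex S.toAddSubgroup O.toAddSubgroup B.toAddSubgroup
    (fun _ hx => hSO hx) (fun _ hx => hOB hx)
  have hSO' : AddSubgroup.relIndex S.toAddSubgroup O.toAddSubgroup = 1 :=
    Nat.eq_of_mul_eq_mul_right (Nat.pos_of_ne_zero h0) (by rw [one_mul]; exact hmul.trans h)
  exact le_antisymm hSO fun _ hx => AddSubgroup.relIndex_eq_one.mp hSO' hx

variable {𝔣 : Ideal B}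

theorem map_intPlus_le_of_conductorOf_eq {O : Subring k} (h : conductorOf O B = 𝔣) :
    𝔣.intPlus.map B.subtype ≤ O := by
  rintro _ ⟨y, hy, rfl⟩
  obtain ⟨n, hn⟩ := Ideal.mem_intPlus.mp hy
  rw [← h] at hn
  simpa using add_mem (coe_mem_of_mem_conductorOf hn) (intCast_mem O n)

theorem conductorOf_map_intPlus {f : ℕ} (hf : Squarefree f) (hmem : (f : B) ∈ 𝔣)
    (hindex : 𝔣.intPlus.toAddSubgroup.index = f) :
    conductorOf (𝔣.intPlus.map B.subtype) B = 𝔣 := by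
  refine le_antisymm (fun x hx => ?_) fun x hx y => ?_
  · refine Ideal.mem_of_forall_mul_mem_intPlus hf hmem hindex fun y => ?_
    exact Subring.coe_mem_map_subtype.mp (by simpa using hx y)
  · exact_mod_cast Subring.coe_mem_map_subtype.mpr
      (Ideal.mem_intPlus_of_mem (Ideal.mul_mem_right y _ hx))

end Conductor

theorem squarefree_index_order_unique_general
    (k : Type*) [CommRing k]
    (f : ℕ) (hsf : Squarefree f) :
    ∀ 𝔣 : Ideal ↥(maximalOrder k),
      Ideal.span {(f : ↥(maximalOrder k))} ≤ 𝔣 → idealNorm 𝔣 = f ^ 2 →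
      (∃! O : Subring k, IsOrder k O ∧ subringIndex O (maximalOrder k) = f ∧
          conductorOf O (maximalOrder k) = 𝔣) ∧
      (∀ O : Subring k, IsOrder k O → subringIndex O (maximalOrder k) = f →
        conductorOf O (maximalOrder k) = 𝔣 →
        ∀ x : ↥(maximalOrder k),
          (x : k) ∈ O ↔ ∃ n : ℤ, x - n • (1 : ↥(maximalOrder k)) ∈ 𝔣) := by
  intro 𝔣 hspan hnorm
  have hmem : (f : maximalOrder k) ∈ 𝔣 := hspan (Ideal.mem_span_singleton_self _)
  have hindex : 𝔣.intPlus.toAddSubgroup.index = f := Ideal.index_intPlus hsf hmem hnorm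
  set S := 𝔣.intPlus.map (maximalOrder k).subtype
  have hSindex : subringIndex S (maximalOrder k) = f := by
    rw [subringIndex_map_subtype, hindex]
  have hS : IsOrder k S ∧ subringIndex S (maximalOrder k) = f ∧
      conductorOf S (maximalOrder k) = 𝔣 :=
    ⟨⟨fun _ ⟨y, _, hy⟩ => hy ▸ y.2, hSindex ▸ hsf.ne_zero⟩, hSindex,
      conductorOf_map_intPlus hsf hmem hindex⟩
  have huniq : ∀ O : Subring k, IsOrder k O → subringIndex O (maximalOrder k) = f →
      conductorOf O (maximalOrder k) = 𝔣 → O = S := fun O hO hOindex hOcond =>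
    (eq_of_le_of_subringIndex_eq (map_intPlus_le_of_conductorOf_eq hOcond) hO.1
      (hSindex.trans hOindex.symm) hO.2).symm
  refine ⟨⟨S, hS, fun O hO => huniq O hO.1 hO.2.1 hO.2.2⟩, fun O hO hOindex hOcond x => ?_⟩
  rw [huniq O hO hOindex hOcond, Subring.coe_mem_map_subtype, Ideal.mem_intPlus]

/-- Let `k` be an étale cubic algebra over `ℚ` and `f` a square-free
positive integer such that no prime dividing `f` is of type `3` in `k`.  Then for each
ideal `𝔣` of `O_k` with `f O_k ⊆ 𝔣` and `N(𝔣) = f²`, there is exactly one order `R`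
of index `f` in `O_k` with conductor `𝔣`, namely `R = ℤ + 𝔣`. -/
theorem squarefree_index_order_unique
    (k : Type*) [CommRing k] [Algebra ℚ k] [FiniteDimensional ℚ k] [IsReduced k]
    (hdeg : Module.finrank ℚ k = 3)
    (f : ℕ) (hf : 0 < f) (hsf : Squarefree f)
    (htype : ∀ p : ℕ, p.Prime → p ∣ f →
      ¬ ((Ideal.span {(p : ↥(maximalOrder k))}).IsPrime ∧
          idealNorm (Ideal.span {(p : ↥(maximalOrder k))}) = p ^ 3)) :
    ∀ 𝔣 : Ideal ↥(maximalOrder k),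
      Ideal.span {(f : ↥(maximalOrder k))} ≤ 𝔣 → idealNorm 𝔣 = f ^ 2 →
      (∃! O : Subring k, IsOrder k O ∧ subringIndex O (maximalOrder k) = f ∧
          conductorOf O (maximalOrder k) = 𝔣) ∧
      (∀ O : Subring k, IsOrder k O → subringIndex O (maximalOrder k) = f →
        conductorOf O (maximalOrder k) = 𝔣 →
        ∀ x : ↥(maximalOrder k),
          (x : k) ∈ O ↔ ∃ n : ℤ, x - n • (1 : ↥(maximalOrder k)) ∈ 𝔣) :=
  squarefree_index_order_unique_general k f hsf
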